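/- arXiv:2012.14045 — 2 statements merged into one kernel-verified Lean document; each statement's English description precedes it below -/
import Mathlib

section
/- Set t_n := nⁿ for n ≥ 2. Then for every ε > 0, ℙ( ⋂_{k≥2} ⋃_{n≥k} { φ(t_n)·g*_{t_{n−1}} > ε } ) = 0; equivalently, φ(t_n)·g*_{t_{n−1}} → 0 almost surely as n → ∞. -/
open MeasureTheory ProbabilityTheory Filter Set

noncomputable section

variable {Ω : Type*} [MeasureSpace Ω]

/-- A standard one-dimensional Brownian motion started at `0`: continuous paths,
Gaussian increments with variance `t - s`, and independent increments. -/
def IsStdBM (X : ℝ → Ω → ℝ) : Prop :=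
  (∀ ω, X 0 ω = 0) ∧
  (∀ ω, Continuous fun t => X t ω) ∧
  (∀ t, Measurable (X t)) ∧
  (∀ s t : ℝ, 0 ≤ s → s ≤ t →
    Measure.map (fun ω => X t ω - X s ω) ℙ = gaussianReal 0 (Real.toNNReal (t - s))) ∧
  (∀ (n : ℕ) (t : Fin (n + 1) → ℝ), Monotone t → 0 ≤ t 0 →
    iIndepFun
      (fun i : Fin n => fun ω => X (t i.succ) ω - X (t i.castSucc) ω) ℙ)

/-- The coordinate processes `B¹, B², b` are (jointly) independent. -/
def HeisIndep (B1 B2 b : ℝ → Ω → ℝ) : Prop :=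
  iIndep (fun i : Fin 3 =>
    MeasurableSpace.comap (fun ω => fun t : ℝ => ![B1, B2, b] i t ω) inferInstance) ℙ

/-- The data of a hypoelliptic Brownian motion on the Heisenberg group:
`(B¹, B²)` is a standard 2D Brownian motion and `b` is a standard 1D Brownian
motion independent of it. -/
def HeisSetup (B1 B2 b : ℝ → Ω → ℝ) : Prop :=
  IsStdBM B1 ∧ IsStdBM B2 ∧ IsStdBM b ∧ HeisIndep B1 B2 b

/-- `τ(t) = (1/4) ∫₀ᵗ ‖B_s‖² ds`. -/
def tauTC (B1 B2 : ℝ → Ω → ℝ) (t : ℝ) (ω : Ω) : ℝ :=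
  (1 / 4) * ∫ s in (0 : ℝ)..t, ((B1 s ω) ^ 2 + (B2 s ω) ^ 2)

/-- Lévy's stochastic area `A_t = b_{τ(t)}`. -/
def levyA (B1 B2 b : ℝ → Ω → ℝ) (t : ℝ) (ω : Ω) : ℝ :=
  b (tauTC B1 B2 t ω) ω

/-- Homogeneous norm of `g_t = (B_t, A_t)`:  `(‖B_t‖⁴ + A_t²)^{1/4}`. -/
def gnorm (B1 B2 b : ℝ → Ω → ℝ) (t : ℝ) (ω : Ω) : ℝ :=
  (((B1 t ω) ^ 2 + (B2 t ω) ^ 2) ^ 2 + (levyA B1 B2 b t ω) ^ 2) ^ ((1 : ℝ) / 4)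

/-- Running maximum `g*_t = max_{0 ≤ s ≤ t} |g_s|`. -/
def gstar (B1 B2 b : ℝ → Ω → ℝ) (t : ℝ) (ω : Ω) : ℝ :=
  ⨆ s ∈ Set.Icc (0 : ℝ) t, gnorm B1 B2 b s ω

/-- Running maximum of the Euclidean norm of the 2D Brownian motion. -/
def Bstar (B1 B2 : ℝ → Ω → ℝ) (t : ℝ) (ω : Ω) : ℝ :=
  ⨆ s ∈ Set.Icc (0 : ℝ) t, Real.sqrt ((B1 s ω) ^ 2 + (B2 s ω) ^ 2)

/-- Running maximum of the absolute value of the 1D Brownian motion. -/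
def bstar (b : ℝ → Ω → ℝ) (t : ℝ) (ω : Ω) : ℝ :=
  ⨆ s ∈ Set.Icc (0 : ℝ) t, |b s ω|

/-- `φ(t) = √(log log t / t)`. -/
def phiLIL (t : ℝ) : ℝ := Real.sqrt (Real.log (Real.log t) / t)

/-- `c(λ₁, λ₂) = inf_{x ∈ (0,1)} [ λ₂/√(1-x) + λ₁ √(1-x)/(4x) ]`. -/
def cLIL (l1 l2 : ℝ) : ℝ :=
  ⨅ x : Set.Ioo (0 : ℝ) 1,
    (l2 / Real.sqrt (1 - (x : ℝ)) + l1 * Real.sqrt (1 - (x : ℝ)) / (4 * (x : ℝ)))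

end

namespace HeisAux
open Real

lemma real_iSup_empty {ι : Sort*} [IsEmpty ι] (f : ι → ℝ) : (⨆ i, f i) = 0 := by
  rw [iSup_of_empty']; exact Real.sSup_empty

lemma real_biSup_le {f : ℝ → ℝ} {t c : ℝ} (hc : 0 ≤ c) (h : ∀ s ∈ Icc (0:ℝ) t, f s ≤ c) :
    (⨆ s ∈ Icc (0:ℝ) t, f s) ≤ c :=
  Real.iSup_le (fun s => Real.iSup_le (fun hs => h s hs) hc) hc

lemma real_biSup_nonneg {f : ℝ → ℝ} {t : ℝ} (h : ∀ s, 0 ≤ f s) :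
    0 ≤ ⨆ s ∈ Icc (0:ℝ) t, f s :=
  Real.iSup_nonneg fun u => Real.iSup_nonneg fun _ => h u

lemma le_real_biSup {f : ℝ → ℝ} (hf : Continuous f) {t s : ℝ} (hs : s ∈ Icc (0:ℝ) t) :
    f s ≤ ⨆ u ∈ Icc (0:ℝ) t, f u := by
  obtain ⟨C, hC⟩ := isCompact_Icc.exists_bound_of_continuousOn (f := f)
    (hf.continuousOn : ContinuousOn f (Icc (0:ℝ) t))
  have hbd : BddAbove (Set.range fun u => ⨆ _ : u ∈ Icc (0:ℝ) t, f u) := by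
    refine ⟨max C 0, ?_⟩
    rintro x ⟨u, rfl⟩
    dsimp only
    by_cases hu : u ∈ Icc (0:ℝ) t
    · haveI : Nonempty (u ∈ Icc (0:ℝ) t) := ⟨hu⟩
      rw [ciSup_const]
      exact le_max_of_le_left ((le_abs_self _).trans (hC u hu))
    · haveI : IsEmpty (u ∈ Icc (0:ℝ) t) := ⟨hu⟩
      rw [real_iSup_empty]; exact le_max_right _ _
  have h1 : (⨆ _ : s ∈ Icc (0:ℝ) t, f s) = f s := by
    haveI : Nonempty (s ∈ Icc (0:ℝ) t) := ⟨hs⟩; exact ciSup_const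
  exact h1 ▸ le_ciSup hbd s

lemma exists_of_lt_biSup {f : ℝ → ℝ} {t v : ℝ} (hv : 0 ≤ v)
    (h : v < ⨆ s ∈ Icc (0:ℝ) t, f s) : ∃ s ∈ Icc (0:ℝ) t, v < f s := by
  obtain ⟨s, hs⟩ := exists_lt_of_lt_ciSup h
  by_cases hmem : s ∈ Icc (0:ℝ) t
  · haveI : Nonempty (s ∈ Icc (0:ℝ) t) := ⟨hmem⟩
    rw [ciSup_const] at hs
    exact ⟨s, hmem, hs⟩
  · haveI : IsEmpty (s ∈ Icc (0:ℝ) t) := ⟨hmem⟩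
    rw [real_iSup_empty] at hs
    exact absurd hs (not_lt.mpr hv)

/-- Gaussian tail bound. -/
lemma gauss_tail (v : NNReal) {r : ℝ} (hr : 0 < r) :
    gaussianReal 0 v {x | r ≤ |x|} ≤ ENNReal.ofReal (2 * rexp (-r^2/(4*(v:ℝ)))) := by
  rcases eq_or_ne v 0 with hv | hv
  · subst hv
    rw [gaussianReal_zero_var]
    have hs : MeasurableSet {x : ℝ | r ≤ |x|} :=
      (isClosed_le continuous_const continuous_abs).measurableSet
    rw [Measure.dirac_apply' _ hs]
    have : (0:ℝ) ∉ {x : ℝ | r ≤ |x|} := by simp [hr.not_ge, abs_of_nonneg]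
    simp [Set.indicator_of_notMem this]
  · have hvpos : (0:ℝ) < v := by positivity
    rw [gaussianReal_apply_eq_integral 0 hv]
    set s : Set ℝ := {x | r ≤ |x|}
    have hs : MeasurableSet s :=
      (isClosed_le continuous_const continuous_abs).measurableSet
    set c : ℝ := (Real.sqrt (2 * π * v))⁻¹ with hc
    have hcpos : 0 < c := by
      rw [hc]; positivity
    set g : ℝ → ℝ := fun x => c * rexp (-r^2/(4*(v:ℝ))) * rexp (-(1/(4*(v:ℝ))) * x^2) with hg
    have hgint : Integrable g := by
      exact (integrable_exp_neg_mul_sq (by positivity)).const_mul _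
    have hvne : ((v:ℝ)) ≠ 0 := ne_of_gt hvpos
    have hpt : ∀ x ∈ s, gaussianPDFReal 0 v x ≤ g x := by
      intro x hx
      have hx2 : r^2 ≤ x^2 := by
        have := pow_le_pow_left₀ hr.le hx 2
        simpa [sq_abs] using this
      have key : rexp (-x^2/(2*(v:ℝ))) ≤ rexp (-r^2/(4*(v:ℝ))) * rexp (-(1/(4*(v:ℝ))) * x^2) := by
        rw [← Real.exp_add]
        apply Real.exp_le_exp.mpr
        have e1 : -r^2/(4*(v:ℝ)) + -(1/(4*(v:ℝ))) * x^2 = (-r^2 + -x^2)/(4*(v:ℝ)) := by ring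
        rw [e1, div_le_div_iff₀ (by positivity) (by positivity)]
        nlinarith [mul_le_mul_of_nonneg_right hx2 hvpos.le]
      rw [gaussianPDFReal_def]
      simp only [sub_zero]
      calc (Real.sqrt (2*π*(v:ℝ)))⁻¹ * rexp (-x^2/(2*(v:ℝ)))
          ≤ c * (rexp (-r^2/(4*(v:ℝ))) * rexp (-(1/(4*(v:ℝ))) * x^2)) :=
            mul_le_mul_of_nonneg_left key hcpos.le
        _ = g x := by rw [hg]; ring
    have h1 : ∫ x in s, gaussianPDFReal 0 v x ≤ ∫ x in s, g x :=
      setIntegral_mono_on ((integrable_gaussianPDFReal 0 v).integrableOn) hgint.integrableOn hs hpt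
    have h2 : ∫ x in s, g x ≤ ∫ x, g x :=
      setIntegral_le_integral hgint (Filter.Eventually.of_forall fun x => by positivity)
    have h3 : ∫ x, g x = c * rexp (-r^2/(4*(v:ℝ))) * Real.sqrt (π / (1/(4*(v:ℝ)))) := by
      rw [hg, MeasureTheory.integral_const_mul, integral_gaussian]
    have hsq : Real.sqrt (π / (1/(4*(v:ℝ)))) = Real.sqrt 2 * Real.sqrt (2*π*(v:ℝ)) := by
      rw [← Real.sqrt_mul (by norm_num : (0:ℝ) ≤ 2)]
      congr 1
      field_simp
      ring
    have hc2 : c * Real.sqrt (π / (1/(4*(v:ℝ)))) ≤ 2 := by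
      rw [hsq, hc]
      have hspos : 0 < Real.sqrt (2*π*(v:ℝ)) := Real.sqrt_pos.mpr (by positivity)
      rw [mul_comm (Real.sqrt 2), ← mul_assoc, inv_mul_cancel₀ (ne_of_gt hspos), one_mul]
      nlinarith [Real.sq_sqrt (by norm_num : (0:ℝ) ≤ 2), Real.sqrt_nonneg (2:ℝ)]
    have hfinal : ∫ x in s, gaussianPDFReal 0 v x ≤ 2 * rexp (-r^2/(4*(v:ℝ))) := by
      have := h1.trans (h2.trans_eq h3)
      calc ∫ x in s, gaussianPDFReal 0 v x
          ≤ c * rexp (-r^2/(4*(v:ℝ))) * Real.sqrt (π / (1/(4*(v:ℝ)))) := this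
        _ = rexp (-r^2/(4*(v:ℝ))) * (c * Real.sqrt (π / (1/(4*(v:ℝ))))) := by ring
        _ ≤ rexp (-r^2/(4*(v:ℝ))) * 2 := by
            exact mul_le_mul_of_nonneg_left hc2 (Real.exp_nonneg _)
        _ = 2 * rexp (-r^2/(4*(v:ℝ))) := by ring
    exact ENNReal.ofReal_le_ofReal hfinal


variable {Ω : Type*} [MeasureSpace Ω]

lemma bm_tail {X : ℝ → Ω → ℝ} (hX : IsStdBM X) {s t V r : ℝ} (h0 : 0 ≤ s) (hst : s ≤ t)
    (hV : t - s ≤ V) (hVpos : 0 < V) (hr : 0 < r) :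
    ℙ {ω | r ≤ |X t ω - X s ω|} ≤ ENNReal.ofReal (2 * rexp (-r^2/(4*V))) := by
  obtain ⟨hzero, hcont, hmeas, hlaw, hindep⟩ := hX
  rcases eq_or_lt_of_le hst with heq | hlt
  · subst heq
    have : {ω | r ≤ |X s ω - X s ω|} = ∅ := by
      ext ω; simp [hr.not_ge]
    rw [this]; simp
  · have hY : Measurable fun ω => X t ω - X s ω := (hmeas t).sub (hmeas s)
    have hset : MeasurableSet {x : ℝ | r ≤ |x|} :=
      (isClosed_le continuous_const continuous_abs).measurableSet
    have hpre : {ω | r ≤ |X t ω - X s ω|} = (fun ω => X t ω - X s ω) ⁻¹' {x | r ≤ |x|} := rfl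
    rw [hpre, ← Measure.map_apply hY hset, hlaw s t h0 hst]
    refine (gauss_tail _ hr).trans (ENNReal.ofReal_le_ofReal ?_)
    have hts : (0:ℝ) < t - s := sub_pos.mpr hlt
    have hcoe : ((Real.toNNReal (t - s)):ℝ) = t - s := Real.coe_toNNReal _ hts.le
    rw [hcoe]
    have hle : -r^2/(4*(t-s)) ≤ -r^2/(4*V) := by
      rw [neg_div, neg_div, neg_le_neg_iff]
      exact div_le_div_of_nonneg_left (by positivity) (by positivity) (by linarith)
    have := Real.exp_le_exp.mpr hle
    nlinarith [Real.exp_nonneg (-r^2/(4*(t-s)))]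

lemma grid_max [IsProbabilityMeasure (ℙ : Measure Ω)] {X : ℝ → Ω → ℝ} (hX : IsStdBM X)
    {T : ℝ} (hT : 0 < T) {N : ℕ} (hN : 0 < N) {α : ℝ} (hα : 0 < α) :
    ℙ {ω | ∃ k ≤ N, 3*α < |X ((k:ℝ) * (T/N)) ω|} ≤ ENNReal.ofReal (4 * rexp (-α^2/(4*T))) := by
  classical
  obtain ⟨hzero, hcont, hmeas, hlaw, hindep⟩ := hX
  set h : ℝ := T / N with hh_def
  have hh : 0 < h := div_pos hT (by exact_mod_cast hN)
  have hNh : (N:ℝ) * h = T := by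
    rw [hh_def]; field_simp
  set v : ℝ := 3 * α with hv_def
  have hvpos : 0 < v := by positivity
  set A : ℕ → Set Ω := fun k => {ω | v < |X ((k:ℝ)*h) ω| ∧ ∀ j < k, |X ((j:ℝ)*h) ω| ≤ v}
    with hA_def
  have hAm : ∀ k, MeasurableSet (A k) := by
    intro k
    have h1 : MeasurableSet {ω | v < |X ((k:ℝ)*h) ω|} :=
      measurableSet_lt measurable_const (hmeas _).abs
    have heq : A k = {ω | v < |X ((k:ℝ)*h) ω|} ∩
        ⋂ j ∈ Finset.range k, {ω | |X ((j:ℝ)*h) ω| ≤ v} := by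
      ext ω
      simp only [hA_def, mem_setOf_eq, mem_inter_iff, mem_iInter, Finset.mem_range]
    rw [heq]
    exact h1.inter (MeasurableSet.biInter (Finset.range k).countable_toSet
      (fun j _ => measurableSet_le (hmeas _).abs measurable_const))
  set E : Set Ω := ⋃ k ∈ Finset.range (N+1), {ω | v < |X ((k:ℝ)*h) ω|} with hE_def
  have htargetE : {ω | ∃ k ≤ N, 3*α < |X ((k:ℝ) * (T/N)) ω|} = E := by
    ext ω
    simp only [hE_def, mem_iUnion, mem_setOf_eq, Finset.mem_range, Nat.lt_succ_iff, ← hh_def,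
      ← hv_def]
    constructor
    · rintro ⟨k, hk, hko⟩; exact ⟨k, hk, hko⟩
    · rintro ⟨k, hk, hko⟩; exact ⟨k, hk, hko⟩
  have hEA : E ⊆ ⋃ k ∈ Finset.range (N+1), A k := by
    intro ω hω
    simp only [hE_def, mem_iUnion, mem_setOf_eq, Finset.mem_range, Nat.lt_succ_iff] at hω
    obtain ⟨k0, hk0, hko⟩ := hω
    have hex : ∃ j : ℕ, v < |X ((j:ℝ)*h) ω| := ⟨k0, hko⟩
    refine mem_iUnion₂.mpr ⟨Nat.find hex, ?_, ?_⟩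
    · exact Finset.mem_range.mpr (Nat.lt_succ_of_le ((Nat.find_min' hex hko).trans hk0))
    · exact ⟨Nat.find_spec hex, fun j hj => le_of_not_gt (Nat.find_min hex hj)⟩
  have hdisjA : (↑(Finset.range (N+1)) : Set ℕ).PairwiseDisjoint A := by
    have key : ∀ i j : ℕ, i < j → Disjoint (A i) (A j) := by
      intro i j hlt
      refine Set.disjoint_left.mpr fun ω hi hj => ?_
      exact absurd hi.1 (not_lt.mpr (hj.2 i hlt))
    intro i _ j _ hij
    rcases hij.lt_or_gt with hlt | hlt
    · exact key i j hlt
    · exact (key j i hlt).symm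
  -- independence and per-piece bounds
  set Bs : ℕ → Set Ω := fun k => {ω | 2*α ≤ |X ((N:ℝ)*h) ω - X ((k:ℝ)*h) ω|} with hBs_def
  set C : Set Ω := {ω | α ≤ |X ((N:ℝ)*h) ω|} with hC_def
  have hsplit : ∀ k, A k ⊆ (A k ∩ Bs k) ∪ C := by
    intro k ω hω
    by_cases hb : 2*α ≤ |X ((N:ℝ)*h) ω - X ((k:ℝ)*h) ω|
    · exact Or.inl ⟨hω, hb⟩
    · right
      push_neg at hb
      have h1 : v < |X ((k:ℝ)*h) ω| := hω.1
      have h2 : |X ((k:ℝ)*h) ω| - |X ((N:ℝ)*h) ω| ≤ |X ((k:ℝ)*h) ω - X ((N:ℝ)*h) ω| :=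
        abs_sub_abs_le_abs_sub _ _
      rw [abs_sub_comm] at h2
      simp only [hC_def, mem_setOf_eq]
      rw [hv_def] at h1
      linarith
  -- independence claim
  have hindep_piece : ∀ k ≤ N, ℙ (A k ∩ Bs k) = ℙ (A k) * ℙ (Bs k) := by
    intro k hk
    set t' : Fin (N+1) → ℝ := fun i => (i : ℕ) * h with ht'_def
    have hmono : Monotone t' := fun i j hij =>
      mul_le_mul_of_nonneg_right (Nat.cast_le.mpr hij) hh.le
    have ht0 : (0:ℝ) ≤ t' 0 := by simp [ht'_def]
    have hInd := hindep N t' hmono ht0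
    set D : Fin N → Ω → ℝ := fun i ω => X (t' i.succ) ω - X (t' i.castSucc) ω with hD_def
    have hDmeas : ∀ i, Measurable (D i) := fun i => (hmeas _).sub (hmeas _)
    have hsumD : ∀ j, j ≤ N → ∀ ω,
        (∑ i ∈ Finset.univ.filter (fun i : Fin N => (i:ℕ) < j), D i ω) = X ((j:ℝ)*h) ω := by
      intro j
      induction j with
      | zero =>
        intro _ ω
        have hf : Finset.univ.filter (fun i : Fin N => (i:ℕ) < 0) = ∅ := by
          ext i; simp
        rw [hf, Finset.sum_empty]
        simp [hzero ω]
      | succ j ih =>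
        intro hj ω
        have hjN : j < N := Nat.lt_of_succ_le hj
        have hins : Finset.univ.filter (fun i : Fin N => (i:ℕ) < j+1) =
            insert (⟨j, hjN⟩ : Fin N) (Finset.univ.filter fun i : Fin N => (i:ℕ) < j) := by
          ext i
          simp only [Finset.mem_filter, Finset.mem_univ, true_and, Finset.mem_insert,
            Nat.lt_succ_iff_lt_or_eq, Fin.ext_iff]
          tauto
        rw [hins, Finset.sum_insert (by simp)]
        rw [ih hjN.le ω]
        have hD1 : D ⟨j, hjN⟩ ω = X (((j:ℝ)+1)*h) ω - X ((j:ℝ)*h) ω := by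
          simp only [hD_def, ht'_def, Fin.succ, Fin.castSucc, Fin.castAdd, Fin.castLE]
          norm_num
        rw [hD1]
        have : ((j+1 : ℕ):ℝ) = (j:ℝ) + 1 := by push_cast; ring
        rw [this]
        ring
    set Sk : Finset (Fin N) := Finset.univ.filter (fun i : Fin N => (i:ℕ) < k) with hSk_def
    set Tk : Finset (Fin N) := Finset.univ.filter (fun i : Fin N => ¬((i:ℕ) < k)) with hTk_def
    have hdisj : Disjoint Sk Tk := Finset.disjoint_filter_filter_not _ _ _
    have hIndF := hInd.indepFun_finset Sk Tk hdisj hDmeas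
    set FS : Ω → (Sk → ℝ) := fun ω i => D i ω with hFS_def
    set FT : Ω → (Tk → ℝ) := fun ω i => D i ω with hFT_def
    set ψ : ℕ → (Sk → ℝ) → ℝ := fun j y => ∑ i : Sk, if ((i : Fin N) : ℕ) < j then y i else 0
      with hψ_def
    have hψmeas : ∀ j, Measurable (ψ j) := by
      intro j
      apply Finset.measurable_sum
      intro i _
      by_cases hc : ((i : Fin N) : ℕ) < j
      · simpa [hc] using measurable_pi_apply i
      · simpa [hc] using measurable_const
    have hψeq : ∀ j, j ≤ k → ∀ ω, ψ j (FS ω) = X ((j:ℝ)*h) ω := by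
      intro j hj ω
      have h1 : ψ j (FS ω) = ∑ i ∈ Sk, if (i:ℕ) < j then D i ω else 0 := by
        simp only [hψ_def, hFS_def]
        exact Finset.sum_coe_sort Sk (fun i => if (i:ℕ) < j then D i ω else 0)
      rw [h1, ← Finset.sum_filter]
      have h2 : Sk.filter (fun i : Fin N => (i:ℕ) < j) =
          Finset.univ.filter (fun i : Fin N => (i:ℕ) < j) := by
        rw [hSk_def, Finset.filter_filter]
        apply Finset.filter_congr
        intro i _
        constructor
        · rintro ⟨_, h⟩; exact h
        · intro h2'; exact ⟨lt_of_lt_of_le h2' hj, h2'⟩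
      rw [h2, hsumD j (hj.trans hk) ω]
    set χ : (Tk → ℝ) → ℝ := fun z => ∑ i : Tk, z i with hχ_def
    have hχmeas : Measurable χ := by
      apply Finset.measurable_sum
      intro i _
      exact measurable_pi_apply i
    have hχeq : ∀ ω, χ (FT ω) = X ((N:ℝ)*h) ω - X ((k:ℝ)*h) ω := by
      intro ω
      have h1 : χ (FT ω) = ∑ i ∈ Tk, D i ω := by
        simp only [hχ_def, hFT_def]
        exact Finset.sum_coe_sort Tk (fun i => D i ω)
      have h2 : (∑ i ∈ Sk, D i ω) + (∑ i ∈ Tk, D i ω) = ∑ i, D i ω :=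
        Finset.sum_filter_add_sum_filter_not _ _ _
      have h3 : (∑ i ∈ Sk, D i ω) = X ((k:ℝ)*h) ω := hsumD k hk ω
      have h4 : (∑ i, D i ω) = X ((N:ℝ)*h) ω := by
        have huniv : Finset.univ.filter (fun i : Fin N => (i:ℕ) < N) =
            (Finset.univ : Finset (Fin N)) := by
          ext i; simp [i.isLt]
        have := hsumD N le_rfl ω
        rw [huniv] at this
        exact this
      rw [h1]
      linarith
    set SA : Set (Sk → ℝ) := {y | v < |ψ k y| ∧ ∀ j ∈ Finset.range k, |ψ j y| ≤ v} with hSA_def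
    have hSAmeas : MeasurableSet SA := by
      have e : SA = {y | v < |ψ k y|} ∩ ⋂ j ∈ Finset.range k, {y | |ψ j y| ≤ v} := by
        ext y
        simp only [hSA_def, mem_setOf_eq, mem_inter_iff, mem_iInter]
      rw [e]
      exact (measurableSet_lt measurable_const (hψmeas k).abs).inter
        (MeasurableSet.biInter (Finset.range k).countable_toSet
          (fun j _ => measurableSet_le (hψmeas j).abs measurable_const))
    set SB : Set (Tk → ℝ) := {z | 2*α ≤ |χ z|} with hSB_def
    have hSBmeas : MeasurableSet SB := measurableSet_le measurable_const hχmeas.abs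
    have hApre : A k = FS ⁻¹' SA := by
      ext ω
      simp only [hA_def, hSA_def, mem_setOf_eq, mem_preimage, Finset.mem_range]
      constructor
      · rintro ⟨h1, h2⟩
        refine ⟨by rw [hψeq k le_rfl ω]; exact h1, fun j hj => ?_⟩
        rw [hψeq j hj.le ω]
        exact h2 j hj
      · rintro ⟨h1, h2⟩
        rw [hψeq k le_rfl ω] at h1
        refine ⟨h1, fun j hj => ?_⟩
        have := h2 j hj
        rwa [hψeq j hj.le ω] at this
    have hBpre : Bs k = FT ⁻¹' SB := by
      ext ω
      simp only [hBs_def, hSB_def, mem_setOf_eq, mem_preimage, hχeq ω]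
    rw [hApre, hBpre]
    exact hIndF.measure_inter_preimage_eq_mul SA SB hSAmeas hSBmeas
  -- tail bounds
  have hBbound : ∀ k ≤ N, ℙ (Bs k) ≤ ENNReal.ofReal (2 * rexp (-α^2/T)) := by
    intro k hk
    have hIsStdBM : IsStdBM X := ⟨hzero, hcont, hmeas, hlaw, hindep⟩
    have h1 := bm_tail hIsStdBM (s := (k:ℝ)*h) (t := (N:ℝ)*h) (V := T) (r := 2*α)
      (by positivity) (mul_le_mul_of_nonneg_right (Nat.cast_le.mpr hk) hh.le)
      (by rw [hNh]; nlinarith [mul_nonneg (Nat.cast_nonneg (α := ℝ) k) hh.le]) hT (by positivity)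
    refine h1.trans (ENNReal.ofReal_le_ofReal ?_)
    have : -(2*α)^2/(4*T) = -α^2/T := by field_simp; ring
    rw [this]
  have hCbound : ℙ C ≤ ENNReal.ofReal (2 * rexp (-α^2/(4*T))) := by
    have hIsStdBM : IsStdBM X := ⟨hzero, hcont, hmeas, hlaw, hindep⟩
    have h1 := bm_tail hIsStdBM (s := 0) (t := (N:ℝ)*h) (V := T) (r := α)
      le_rfl (by positivity) (by rw [hNh]; simp) hT hα
    have hCeq : C = {ω | α ≤ |X ((N:ℝ)*h) ω - X 0 ω|} := by
      ext ω; simp [hC_def, hzero ω]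
    rw [hCeq]
    exact h1
  -- assemble
  rw [htargetE]
  have step1 : ℙ E ≤ ℙ (⋃ k ∈ Finset.range (N+1), (A k ∩ Bs k)) + ℙ C := by
    have hsub : E ⊆ (⋃ k ∈ Finset.range (N+1), (A k ∩ Bs k)) ∪ C := by
      intro ω hω
      obtain ⟨k, hk, hωA⟩ := mem_iUnion₂.mp (hEA hω)
      rcases hsplit k hωA with hc | hc
      · exact Or.inl (mem_iUnion₂.mpr ⟨k, hk, hc⟩)
      · exact Or.inr hc
    exact (measure_mono hsub).trans (measure_union_le _ _)
  have step2 : ℙ (⋃ k ∈ Finset.range (N+1), (A k ∩ Bs k)) ≤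
      ∑ k ∈ Finset.range (N+1), ℙ (A k) * ℙ (Bs k) := by
    refine (measure_biUnion_finset_le _ _).trans ?_
    apply Finset.sum_le_sum
    intro k hk
    rw [hindep_piece k (Nat.lt_succ_iff.mp (Finset.mem_range.mp hk))]
  have step3 : ∑ k ∈ Finset.range (N+1), ℙ (A k) * ℙ (Bs k) ≤
      ENNReal.ofReal (2 * rexp (-α^2/T)) := by
    calc ∑ k ∈ Finset.range (N+1), ℙ (A k) * ℙ (Bs k)
        ≤ ∑ k ∈ Finset.range (N+1), ℙ (A k) * ENNReal.ofReal (2 * rexp (-α^2/T)) := by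
          apply Finset.sum_le_sum
          intro k hk
          exact mul_le_mul_right (hBbound k (Nat.lt_succ_iff.mp (Finset.mem_range.mp hk))) _
      _ = (∑ k ∈ Finset.range (N+1), ℙ (A k)) * ENNReal.ofReal (2 * rexp (-α^2/T)) := by
          rw [Finset.sum_mul]
      _ ≤ 1 * ENNReal.ofReal (2 * rexp (-α^2/T)) := by
          apply mul_le_mul_left
          rw [← measure_biUnion_finset hdisjA (fun k _ => hAm k)]
          exact prob_le_one
      _ = ENNReal.ofReal (2 * rexp (-α^2/T)) := one_mul _
  have hexp : (2 : ℝ) * rexp (-α^2/T) + 2 * rexp (-α^2/(4*T)) ≤ 4 * rexp (-α^2/(4*T)) := by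
    have : rexp (-α^2/T) ≤ rexp (-α^2/(4*T)) := by
      apply Real.exp_le_exp.mpr
      rw [neg_div, neg_div, neg_le_neg_iff]
      exact div_le_div_of_nonneg_left (by positivity) (by positivity) (by nlinarith)
    linarith
  calc ℙ E ≤ ENNReal.ofReal (2 * rexp (-α^2/T)) + ENNReal.ofReal (2 * rexp (-α^2/(4*T))) :=
        step1.trans (add_le_add (step2.trans step3) hCbound)
    _ = ENNReal.ofReal (2 * rexp (-α^2/T) + 2 * rexp (-α^2/(4*T))) := by
        rw [ENNReal.ofReal_add (by positivity) (by positivity)]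
    _ ≤ ENNReal.ofReal (4 * rexp (-α^2/(4*T))) := ENNReal.ofReal_le_ofReal hexp

lemma bstar_tail [IsProbabilityMeasure (ℙ : Measure Ω)] {X : ℝ → Ω → ℝ} (hX : IsStdBM X)
    {T v : ℝ} (hT : 0 < T) (hv : 0 < v) :
    ℙ {ω | v < bstar X T ω} ≤ ENNReal.ofReal (4 * rexp (-(v/3)^2/(4*T))) := by
  classical
  set E : ℕ → Set Ω := fun m => {ω | ∃ k : ℕ, k ≤ 2^m ∧ v < |X ((k:ℝ) * (T/((2^m : ℕ):ℝ))) ω|}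
    with hE_def
  have hEm : ∀ m, MeasurableSet (E m) := by
    intro m
    have : E m = ⋃ k ∈ Finset.range (2^m+1), {ω | v < |X ((k:ℝ) * (T/((2^m : ℕ):ℝ))) ω|} := by
      ext ω
      simp only [hE_def, mem_setOf_eq, mem_iUnion, Finset.mem_range, Nat.lt_succ_iff]
      tauto
    rw [this]
    exact MeasurableSet.biUnion (Finset.range (2^m+1)).countable_toSet
      (fun k _ => measurableSet_lt measurable_const (hX.2.2.1 _).abs)
  have hEmono : Monotone E := by
    intro m m' hmm' ω hω
    obtain ⟨k, hk, hko⟩ := hω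
    have hm'eq : m' = m + (m' - m) := (Nat.add_sub_cancel' hmm').symm
    have hpow : (2:ℕ)^m' = 2^m * 2^(m'-m) := by rw [← pow_add, Nat.add_sub_cancel' hmm']
    refine ⟨k * 2^(m'-m), ?_, ?_⟩
    · rw [hpow]; exact Nat.mul_le_mul_right _ hk
    · have hcast : ((k * 2^(m'-m) : ℕ):ℝ) * (T/((2^m' : ℕ):ℝ)) =
          (k:ℝ) * (T/((2^m : ℕ):ℝ)) := by
        rw [hpow]
        push_cast
        have h2m : ((2:ℝ)^m) ≠ 0 := by positivity
        have h2d : ((2:ℝ)^(m'-m)) ≠ 0 := by positivity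
        field_simp
      rw [hcast]
      exact hko
  have hsub : {ω | v < bstar X T ω} ⊆ ⋃ m, E m := by
    intro ω hω
    have hω' : v < ⨆ s ∈ Icc (0:ℝ) T, |X s ω| := hω
    obtain ⟨s, hs, hvs⟩ := exists_of_lt_biSup hv.le hω'
    have hcontX : Continuous fun u => |X u ω| := (hX.2.1 ω).abs
    have hopen : {u : ℝ | v < |X u ω|} ∈ nhds s :=
      (isOpen_lt continuous_const hcontX).mem_nhds hvs
    obtain ⟨δ, hδpos, hball⟩ := Metric.mem_nhds_iff.mp hopen
    obtain ⟨m, hm⟩ := pow_unbounded_of_one_lt (T/δ) (one_lt_two (α := ℝ))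
    set P : ℝ := ((2^m : ℕ):ℝ) with hP_def
    have hPpos : 0 < P := by rw [hP_def]; positivity
    have hPcast : P = (2:ℝ)^m := by rw [hP_def]; push_cast; ring
    have hmP : T/δ < P := by rw [hPcast]; exact hm
    set k : ℕ := ⌊s * P / T⌋₊ with hk_def
    have hsP : 0 ≤ s * P / T := by
      apply div_nonneg (mul_nonneg hs.1 hPpos.le) hT.le
    have hkle : (k:ℝ) ≤ s * P / T := Nat.floor_le hsP
    have hkub : k ≤ 2^m := by
      have h1 : (k:ℝ) ≤ P := by
        refine hkle.trans ?_
        rw [div_le_iff₀ hT]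
        calc s * P ≤ T * P := mul_le_mul_of_nonneg_right hs.2 hPpos.le
          _ = P * T := by ring
      rw [hP_def] at h1
      exact_mod_cast h1
    set u : ℝ := (k:ℝ) * (T/P) with hu_def
    have hules : u ≤ s := by
      have := mul_le_mul_of_nonneg_right hkle (le_of_lt (div_pos hT hPpos))
      calc u = (k:ℝ) * (T/P) := hu_def
        _ ≤ (s * P / T) * (T/P) := this
        _ = s := by field_simp
    have hslt : s < u + T/P := by
      have h1 : s * P / T < (k:ℝ) + 1 := Nat.lt_floor_add_one _
      have h2 := mul_lt_mul_of_pos_right h1 (div_pos hT hPpos)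
      calc s = (s * P / T) * (T/P) := by field_simp
        _ < ((k:ℝ) + 1) * (T/P) := h2
        _ = u + T/P := by rw [hu_def]; ring
    have hTP : T/P < δ := by
      rw [div_lt_iff₀ hPpos]
      calc T = (T/δ) * δ := by field_simp
        _ < P * δ := mul_lt_mul_of_pos_right hmP hδpos
        _ = δ * P := by ring
    have hdist : dist u s < δ := by
      rw [Real.dist_eq, abs_of_nonpos (by linarith)]
      linarith
    have humem : u ∈ {u : ℝ | v < |X u ω|} := hball (Metric.mem_ball.mpr hdist)
    exact mem_iUnion.mpr ⟨m, ⟨k, hkub, humem⟩⟩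
  have hcup : ℙ (⋃ m, E m) = ⨆ m, ℙ (E m) :=
    Directed.measure_iUnion hEmono.directed_le
  refine (measure_mono hsub).trans ?_
  rw [hcup]
  apply iSup_le
  intro m
  have hα : (0:ℝ) < v/3 := by positivity
  have hgm := grid_max hX hT (N := 2^m) (pow_pos (by norm_num : (0:ℕ) < 2) m) hα
  rw [show 3*(v/3) = v by ring] at hgm
  exact hgm

lemma gstar_pathwise {B1 B2 b : ℝ → Ω → ℝ} (h1 : IsStdBM B1) (h2 : IsStdBM B2) (hb : IsStdBM b)
    {T a : ℝ} (hT : 0 < T) (ha : 0 < a) (ω : Ω)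
    (hB1 : bstar B1 T ω ≤ a/2) (hB2 : bstar B2 T ω ≤ a/2)
    (hbM : bstar b (T*a^2/4) ω ≤ a^2) :
    gstar B1 B2 b T ω ≤ 2*a := by
  have hc1 : Continuous fun u => |B1 u ω| := (h1.2.1 ω).abs
  have hc2 : Continuous fun u => |B2 u ω| := (h2.2.1 ω).abs
  have hcb : Continuous fun u => |b u ω| := (hb.2.1 ω).abs
  have hQ : ∀ s ∈ Icc (0:ℝ) T, (B1 s ω)^2 + (B2 s ω)^2 ≤ a^2 := by
    intro s hs
    have e1 : |B1 s ω| ≤ a/2 := (le_real_biSup hc1 hs).trans hB1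
    have e2 : |B2 s ω| ≤ a/2 := (le_real_biSup hc2 hs).trans hB2
    nlinarith [sq_abs (B1 s ω), sq_abs (B2 s ω), abs_nonneg (B1 s ω), abs_nonneg (B2 s ω)]
  have hQc : Continuous fun u => (B1 u ω)^2 + (B2 u ω)^2 :=
    ((h1.2.1 ω).pow 2).add ((h2.2.1 ω).pow 2)
  have hτ : ∀ s ∈ Icc (0:ℝ) T, tauTC B1 B2 s ω ∈ Icc (0:ℝ) (T*a^2/4) := by
    intro s hs
    have hint : ∀ c d : ℝ, IntervalIntegrable (fun u => (B1 u ω)^2 + (B2 u ω)^2) volume c d :=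
      fun c d => hQc.intervalIntegrable c d
    constructor
    · apply mul_nonneg (by norm_num)
      apply intervalIntegral.integral_nonneg hs.1
      intro u _
      positivity
    · have hmono : (∫ u in (0:ℝ)..s, ((B1 u ω)^2 + (B2 u ω)^2)) ≤ ∫ u in (0:ℝ)..s, a^2 := by
        apply intervalIntegral.integral_mono_on hs.1 (hint 0 s)
          (intervalIntegrable_const)
        intro u hu
        exact hQ u ⟨hu.1, hu.2.trans hs.2⟩
      have hconst : (∫ u in (0:ℝ)..s, (a:ℝ)^2) = s * a^2 := by
        rw [intervalIntegral.integral_const]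
        simp [smul_eq_mul]
      unfold tauTC
      rw [hconst] at hmono
      have : s * a^2 ≤ T * a^2 := mul_le_mul_of_nonneg_right hs.2 (by positivity)
      linarith
  have hpt : ∀ s ∈ Icc (0:ℝ) T, gnorm B1 B2 b s ω ≤ 2*a := by
    intro s hs
    have hA : |levyA B1 B2 b s ω| ≤ a^2 := by
      have := le_real_biSup hcb (hτ s hs)
      exact this.trans hbM
    have hQs := hQ s hs
    have hx0 : (0:ℝ) ≤ ((B1 s ω)^2 + (B2 s ω)^2)^2 + (levyA B1 B2 b s ω)^2 := by positivity
    have hxle : ((B1 s ω)^2 + (B2 s ω)^2)^2 + (levyA B1 B2 b s ω)^2 ≤ (2*a)^4 := by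
      nlinarith [sq_abs (levyA B1 B2 b s ω), sq_nonneg (B1 s ω), sq_nonneg (B2 s ω),
        abs_nonneg (levyA B1 B2 b s ω), sq_nonneg a]
    have h1' : gnorm B1 B2 b s ω ≤ ((2*a)^4) ^ ((1:ℝ)/4) :=
      Real.rpow_le_rpow hx0 hxle (by norm_num)
    have h2' : (((2*a):ℝ)^4) ^ ((1:ℝ)/4) = 2*a := by
      rw [← Real.rpow_natCast (2*a) 4, ← Real.rpow_mul (by positivity)]
      norm_num
    rw [h2'] at h1'
    exact h1'
  exact real_biSup_le (by positivity) hpt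

lemma event_bound [IsProbabilityMeasure (ℙ : Measure Ω)] {B1 B2 b : ℝ → Ω → ℝ}
    (hg : HeisSetup B1 B2 b) {T p ε : ℝ} (hT : 0 < T) (hp : 0 < p) (hε : 0 < ε) :
    ℙ {ω | ε < p * gstar B1 B2 b T ω} ≤
      ENNReal.ofReal (12 * rexp (-(ε/(2*p))^2/(144*T))) := by
  obtain ⟨h1, h2, hb, _⟩ := hg
  set a : ℝ := ε/(2*p) with ha_def
  have ha : 0 < a := by rw [ha_def]; positivity
  have hM : 0 < T*a^2/4 := by positivity
  have hsub : {ω | ε < p * gstar B1 B2 b T ω} ⊆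
      {ω | a/2 < bstar B1 T ω} ∪ {ω | a/2 < bstar B2 T ω} ∪
      {ω | a^2 < bstar b (T*a^2/4) ω} := by
    intro ω hω
    by_contra hc
    simp only [mem_union, mem_setOf_eq, not_or, not_lt] at hc
    obtain ⟨⟨hc1, hc2⟩, hc3⟩ := hc
    have := gstar_pathwise h1 h2 hb hT ha ω hc1 hc2 hc3
    have h2a : p * gstar B1 B2 b T ω ≤ p * (2*a) :=
      mul_le_mul_of_nonneg_left this hp.le
    have hpa : p * (2*a) = ε := by rw [ha_def]; field_simp
    rw [hpa] at h2a
    exact absurd (lt_of_lt_of_le hω h2a) (lt_irrefl ε)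
  have hb1 : ℙ {ω | a/2 < bstar B1 T ω} ≤ ENNReal.ofReal (4 * rexp (-a^2/(144*T))) := by
    have := bstar_tail h1 hT (v := a/2) (by positivity)
    have he : -((a/2)/3)^2/(4*T) = -a^2/(144*T) := by ring
    rwa [he] at this
  have hb2 : ℙ {ω | a/2 < bstar B2 T ω} ≤ ENNReal.ofReal (4 * rexp (-a^2/(144*T))) := by
    have := bstar_tail h2 hT (v := a/2) (by positivity)
    have he : -((a/2)/3)^2/(4*T) = -a^2/(144*T) := by ring
    rwa [he] at this
  have hb3 : ℙ {ω | a^2 < bstar b (T*a^2/4) ω} ≤ ENNReal.ofReal (4 * rexp (-a^2/(144*T))) := by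
    have := bstar_tail hb hM (v := a^2) (by positivity)
    refine this.trans (ENNReal.ofReal_le_ofReal ?_)
    have he : -(a^2/3)^2/(4*(T*a^2/4)) = -a^2/(9*T) := by
      field_simp
      ring
    rw [he]
    have : rexp (-a^2/(9*T)) ≤ rexp (-a^2/(144*T)) := by
      apply Real.exp_le_exp.mpr
      rw [neg_div, neg_div, neg_le_neg_iff]
      exact div_le_div_of_nonneg_left (by positivity) (by positivity) (by nlinarith)
    linarith
  calc ℙ {ω | ε < p * gstar B1 B2 b T ω}
      ≤ ℙ ({ω | a/2 < bstar B1 T ω} ∪ {ω | a/2 < bstar B2 T ω}) +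
        ℙ {ω | a^2 < bstar b (T*a^2/4) ω} := (measure_mono hsub).trans (measure_union_le _ _)
    _ ≤ (ℙ {ω | a/2 < bstar B1 T ω} + ℙ {ω | a/2 < bstar B2 T ω}) +
        ℙ {ω | a^2 < bstar b (T*a^2/4) ω} := by
        exact add_le_add_left (measure_union_le _ _) _
    _ ≤ (ENNReal.ofReal (4 * rexp (-a^2/(144*T))) + ENNReal.ofReal (4 * rexp (-a^2/(144*T)))) +
        ENNReal.ofReal (4 * rexp (-a^2/(144*T))) :=
        add_le_add (add_le_add hb1 hb2) hb3
    _ = ENNReal.ofReal (12 * rexp (-a^2/(144*T))) := by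
        rw [← ENNReal.ofReal_add (by positivity) (by positivity),
          ← ENNReal.ofReal_add (by positivity) (by positivity)]
        congr 1
        ring

lemma numeric_facts {ε : ℝ} (hε : 0 < ε) {n : ℕ} (hn : 2 ≤ n) :
    0 < phiLIL ((n:ℝ)^n) ∧ 0 < (((n-1:ℕ):ℝ)^(n-1)) ∧
    ε^2/1152 * n / Real.log n ≤ (ε/(2*phiLIL ((n:ℝ)^n)))^2/(144*(((n-1:ℕ):ℝ)^(n-1))) := by
  have hn2 : (2:ℝ) ≤ (n:ℝ) := by exact_mod_cast hn
  have hnr1 : (1:ℝ) < (n:ℝ) := by linarith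
  have hnrpos : (0:ℝ) < (n:ℝ) := by linarith
  have hlogn : 0 < Real.log (n:ℝ) := Real.log_pos hnr1
  have htn : (0:ℝ) < (n:ℝ)^n := pow_pos hnrpos n
  have hlogtn : Real.log ((n:ℝ)^n) = (n:ℝ) * Real.log (n:ℝ) := by rw [Real.log_pow]
  have hlog4 : (1:ℝ) < Real.log 4 := by
    rw [Real.lt_log_iff_exp_lt (by norm_num : (0:ℝ) < 4)]
    calc Real.exp 1 < 2.7182818286 := Real.exp_one_lt_d9
      _ < 4 := by norm_num
  have h24 : (2:ℝ) * Real.log 2 = Real.log 4 := by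
    rw [show (4:ℝ) = 2^(2:ℕ) by norm_num, Real.log_pow]
    norm_num
  have hgt1 : (1:ℝ) < (n:ℝ) * Real.log (n:ℝ) := by
    have h2l : Real.log 2 ≤ Real.log (n:ℝ) := Real.log_le_log (by norm_num) hn2
    have : (2:ℝ) * Real.log 2 ≤ (n:ℝ) * Real.log (n:ℝ) :=
      mul_le_mul hn2 h2l (Real.log_nonneg one_le_two) hnrpos.le
    linarith
  have hLpos : 0 < Real.log (Real.log ((n:ℝ)^n)) := by
    rw [hlogtn]; exact Real.log_pos hgt1
  have hLle : Real.log (Real.log ((n:ℝ)^n)) ≤ 2 * Real.log (n:ℝ) := by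
    rw [hlogtn, Real.log_mul (ne_of_gt hnrpos) (ne_of_gt hlogn)]
    have hlog_le : Real.log (n:ℝ) ≤ (n:ℝ) :=
      (Real.log_le_sub_one_of_pos hnrpos).trans (by linarith)
    have : Real.log (Real.log (n:ℝ)) ≤ Real.log (n:ℝ) := Real.log_le_log hlogn hlog_le
    linarith
  have hppos : 0 < phiLIL ((n:ℝ)^n) := by
    apply Real.sqrt_pos.mpr
    exact div_pos hLpos htn
  have hp2 : (phiLIL ((n:ℝ)^n))^2 = Real.log (Real.log ((n:ℝ)^n)) / ((n:ℝ)^n) :=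
    Real.sq_sqrt (by positivity)
  have hn1 : 1 ≤ ((n-1:ℕ):ℝ) := by
    have h' : (1:ℕ) ≤ n - 1 := by omega
    exact_mod_cast h'
  have hTn : (0:ℝ) < (((n-1:ℕ):ℝ)^(n-1)) := pow_pos (by linarith) _
  have htT : (n:ℝ) * (((n-1:ℕ):ℝ)^(n-1)) ≤ (n:ℝ)^n := by
    have hcast : ((n-1:ℕ):ℝ) ≤ (n:ℝ) := by exact_mod_cast Nat.sub_le n 1
    have h1 : (((n-1:ℕ):ℝ)^(n-1)) ≤ (n:ℝ)^(n-1) :=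
      pow_le_pow_left₀ (by linarith) hcast (n-1)
    have hne : n - 1 + 1 = n := by omega
    calc (n:ℝ) * (((n-1:ℕ):ℝ)^(n-1)) ≤ (n:ℝ) * (n:ℝ)^(n-1) :=
          mul_le_mul_of_nonneg_left h1 hnrpos.le
      _ = (n:ℝ)^(n-1+1) := by rw [pow_succ]; ring
      _ = (n:ℝ)^n := by rw [hne]
  refine ⟨hppos, hTn, ?_⟩
  set L : ℝ := Real.log (Real.log ((n:ℝ)^n)) with hL_def
  set Tn : ℝ := (((n-1:ℕ):ℝ)^(n-1)) with hTn_def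
  have ha2 : (ε/(2*phiLIL ((n:ℝ)^n)))^2 = ε^2 * ((n:ℝ)^n)/(4*L) := by
    rw [div_pow, mul_pow, hp2, show (2:ℝ)^2 = 4 by norm_num]
    rw [div_eq_div_iff (by positivity) (by positivity)]
    field_simp
  rw [ha2]
  rw [div_le_div_iff₀ hlogn (by positivity)]
  have key : ε^2 * ((n:ℝ)*Tn)/8 ≤ ε^2 * ((n:ℝ)^n)/(4*L) * Real.log (n:ℝ) := by
    rw [div_mul_eq_mul_div, div_le_div_iff₀ (by norm_num) (by positivity)]
    calc ε^2 * ((n:ℝ)*Tn) * (4*L) ≤ ε^2 * ((n:ℝ)*Tn) * (8 * Real.log (n:ℝ)) := by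
          apply mul_le_mul_of_nonneg_left (by linarith) (by positivity)
      _ ≤ ε^2 * ((n:ℝ)^n) * (8 * Real.log (n:ℝ)) := by
          apply mul_le_mul_of_nonneg_right (mul_le_mul_of_nonneg_left htT (by positivity))
            (by positivity)
      _ = ε^2 * (n:ℝ)^n * Real.log (n:ℝ) * 8 := by ring
  calc ε^2/1152 * (n:ℝ) * (144*Tn) = ε^2 * ((n:ℝ)*Tn)/8 := by ring
    _ ≤ ε^2 * ((n:ℝ)^n)/(4*L) * Real.log (n:ℝ) := key

lemma summable_bound {K : ℝ} (hK : 0 < K) :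
    Summable (fun n : ℕ => 12 * rexp (-(K * (n:ℝ) / Real.log (n:ℝ)))) := by
  have h1 : Real.log =o[Filter.atTop] (fun x : ℝ => x^((1:ℝ)/2)) :=
    isLittleO_log_rpow_atTop (by norm_num)
  have hc : (0:ℝ) < Real.sqrt (K/2) := Real.sqrt_pos.mpr (by positivity)
  have h2 := h1.def hc
  have h3 : ∀ᶠ n : ℕ in Filter.atTop,
      ‖Real.log ((n:ℝ))‖ ≤ Real.sqrt (K/2) * ‖((n:ℝ))^((1:ℝ)/2)‖ :=
    tendsto_natCast_atTop_atTop.eventually h2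
  have h4 : ∀ᶠ n : ℕ in Filter.atTop, (3:ℝ) ≤ (n:ℝ) :=
    tendsto_natCast_atTop_atTop.eventually_ge_atTop 3
  have hEv : ∀ᶠ n : ℕ in Filter.atTop,
      12 * rexp (-(K * (n:ℝ) / Real.log (n:ℝ))) ≤ 12 * ((n:ℝ)^(-2:ℝ)) := by
    filter_upwards [h3, h4] with n hlog hn3
    have hnrpos : (0:ℝ) < (n:ℝ) := by linarith
    have hlogpos : (0:ℝ) < Real.log (n:ℝ) := Real.log_pos (by linarith)
    have hrpow_nonneg : (0:ℝ) ≤ ((n:ℝ))^((1:ℝ)/2) := Real.rpow_nonneg hnrpos.le _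
    rw [Real.norm_eq_abs, Real.norm_eq_abs, abs_of_pos hlogpos, abs_of_nonneg hrpow_nonneg] at hlog
    have hsq : (((n:ℝ))^((1:ℝ)/2))^2 = (n:ℝ) := by
      rw [← Real.rpow_natCast (((n:ℝ))^((1:ℝ)/2)) 2, ← Real.rpow_mul hnrpos.le]
      norm_num
    have hK2 : (Real.sqrt (K/2))^2 = K/2 := Real.sq_sqrt (by positivity)
    have hsql : (Real.log (n:ℝ))^2 ≤ (K/2) * (n:ℝ) := by
      calc (Real.log (n:ℝ))^2 ≤ (Real.sqrt (K/2) * ((n:ℝ))^((1:ℝ)/2))^2 := by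
            apply pow_le_pow_left₀ hlogpos.le hlog
        _ = (K/2) * (n:ℝ) := by rw [mul_pow, hK2, hsq]
    have hdiv : 2 * Real.log (n:ℝ) ≤ K * (n:ℝ) / Real.log (n:ℝ) := by
      rw [le_div_iff₀ hlogpos]
      nlinarith
    have hexp : rexp (-(K * (n:ℝ) / Real.log (n:ℝ))) ≤ rexp (-(2 * Real.log (n:ℝ))) :=
      Real.exp_le_exp.mpr (by linarith)
    have hrw : rexp (-(2 * Real.log (n:ℝ))) = (n:ℝ)^(-2:ℝ) := by
      rw [Real.rpow_def_of_pos hnrpos]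
      ring_nf
    rw [hrw] at hexp
    linarith
  have hO : (fun n : ℕ => 12 * rexp (-(K * (n:ℝ) / Real.log (n:ℝ)))) =O[Filter.atTop]
      (fun n : ℕ => (n:ℝ)^(-2:ℝ)) := by
    rw [Asymptotics.isBigO_iff]
    refine ⟨12, ?_⟩
    filter_upwards [hEv, tendsto_natCast_atTop_atTop.eventually_ge_atTop (0:ℝ)] with n hb hn0
    rw [Real.norm_eq_abs, Real.norm_eq_abs, abs_of_nonneg (by positivity),
      abs_of_nonneg (Real.rpow_nonneg hn0 _)]
    exact hb
  exact summable_of_isBigO_nat (Real.summable_nat_rpow.mpr (by norm_num)) hO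

end HeisAux

/-- Along the sequence `t_n = n^n`, the quantity `φ(t_n) g*_(t_(n-1))` tends to `0`
almost surely. -/
theorem phi_gstar_previous_tendsto_zero {Ω : Type*} [MeasureSpace Ω] [IsProbabilityMeasure (ℙ : Measure Ω)]
    (B1 B2 b : ℝ → Ω → ℝ) (hg : HeisSetup B1 B2 b) :
    (∀ ε : ℝ, 0 < ε →
      ℙ (⋂ (k : ℕ) (_ : 2 ≤ k), ⋃ (n : ℕ) (_ : k ≤ n),
          {ω | ε < phiLIL ((n : ℝ) ^ n) * gstar B1 B2 b (((n - 1 : ℕ) : ℝ) ^ (n - 1)) ω}) = 0) ∧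
      ∀ᵐ ω ∂(ℙ : Measure Ω),
        Filter.Tendsto
          (fun n : ℕ => phiLIL ((n : ℝ) ^ n) * gstar B1 B2 b (((n - 1 : ℕ) : ℝ) ^ (n - 1)) ω)
          Filter.atTop (nhds 0) := by
  classical
  have key : ∀ ε : ℝ, 0 < ε →
      ℙ (⋂ (k : ℕ) (_ : 2 ≤ k), ⋃ (n : ℕ) (_ : k ≤ n),
        {ω | ε < phiLIL ((n : ℝ) ^ n) * gstar B1 B2 b (((n - 1 : ℕ) : ℝ) ^ (n - 1)) ω}) = 0 := by
    intro ε hε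
    set S : ℕ → Set Ω := fun n =>
      {ω | ε < phiLIL ((n : ℝ) ^ n) * gstar B1 B2 b (((n - 1 : ℕ) : ℝ) ^ (n - 1)) ω} with hS_def
    set g : ℕ → ℝ := fun n => 12 * Real.exp (-(ε^2/1152 * (n:ℝ) / Real.log (n:ℝ))) with hg_def
    have hbound : ∀ n, 2 ≤ n → ℙ (S n) ≤ ENNReal.ofReal (g n) := by
      intro n hn
      obtain ⟨hppos, hTpos, hexp⟩ := HeisAux.numeric_facts hε hn
      have hev := HeisAux.event_bound hg hTpos hppos hε
      refine hev.trans (ENNReal.ofReal_le_ofReal ?_)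
      have hmono : Real.exp (-(ε/(2*phiLIL ((n:ℝ)^n)))^2/(144*(((n-1:ℕ):ℝ)^(n-1)))) ≤
          Real.exp (-(ε^2/1152 * (n:ℝ) / Real.log (n:ℝ))) := by
        apply Real.exp_le_exp.mpr
        rw [neg_div]
        exact neg_le_neg hexp
      simp only [hg_def]
      linarith
    have hsum : Summable g := by
      rw [hg_def]
      exact HeisAux.summable_bound (by positivity)
    have htsum : (∑' n, ENNReal.ofReal (g n)) ≠ ⊤ := by
      rw [← ENNReal.ofReal_tsum_of_nonneg (fun n => by positivity) hsum]
      exact ENNReal.ofReal_ne_top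
    have hμle : ∀ k : ℕ,
        ℙ (⋂ (k : ℕ) (_ : 2 ≤ k), ⋃ (n : ℕ) (_ : k ≤ n), S n) ≤
          ∑' j, ENNReal.ofReal (g (j + (k+2))) := by
      intro k
      have hsub : (⋂ (k : ℕ) (_ : 2 ≤ k), ⋃ (n : ℕ) (_ : k ≤ n), S n) ⊆
          ⋃ j : ℕ, S (j + (k+2)) := by
        intro ω hω
        have h1 : ω ∈ ⋃ (n : ℕ) (_ : (k+2) ≤ n), S n := by
          have h2 := Set.mem_iInter.mp hω (k+2)
          exact Set.mem_iInter.mp h2 (by omega)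
        obtain ⟨n, hn, hωn⟩ := Set.mem_iUnion₂.mp h1
        exact Set.mem_iUnion.mpr ⟨n - (k+2), by rw [Nat.sub_add_cancel hn]; exact hωn⟩
      refine (measure_mono hsub).trans ((measure_iUnion_le _).trans ?_)
      exact ENNReal.tsum_le_tsum (fun j => hbound (j+(k+2)) (by omega))
    have htend : Filter.Tendsto (fun k : ℕ => ∑' j, ENNReal.ofReal (g (j + (k+2))))
        Filter.atTop (nhds 0) := by
      have h1 := ENNReal.tendsto_sum_nat_add (fun n => ENNReal.ofReal (g n)) htsum
      exact h1.comp (tendsto_add_atTop_nat 2)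
    have hle0 : ℙ (⋂ (k : ℕ) (_ : 2 ≤ k), ⋃ (n : ℕ) (_ : k ≤ n), S n) ≤ 0 :=
      ge_of_tendsto' htend hμle
    exact le_antisymm hle0 (by positivity)
  refine ⟨key, ?_⟩
  have hf0 : ∀ (n : ℕ) (ω : Ω),
      0 ≤ phiLIL ((n : ℝ) ^ n) * gstar B1 B2 b (((n - 1 : ℕ) : ℝ) ^ (n - 1)) ω := by
    intro n ω
    apply mul_nonneg
    · exact Real.sqrt_nonneg _
    · exact HeisAux.real_biSup_nonneg (fun s => Real.rpow_nonneg (by positivity) _)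
  have hae : ∀ᵐ ω ∂(ℙ : Measure Ω), ∀ m : ℕ,
      ω ∉ (⋂ (k : ℕ) (_ : 2 ≤ k), ⋃ (n : ℕ) (_ : k ≤ n),
        {ω | 1/((m:ℝ)+1) < phiLIL ((n : ℝ) ^ n) * gstar B1 B2 b (((n - 1 : ℕ) : ℝ) ^ (n - 1)) ω}) :=
    ae_all_iff.mpr (fun m => measure_eq_zero_iff_ae_notMem.mp (key (1/((m:ℝ)+1)) (by positivity)))
  filter_upwards [hae] with ω hω
  rw [Metric.tendsto_atTop]
  intro e he
  obtain ⟨m, hm⟩ := exists_nat_one_div_lt he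
  have hnm := hω m
  simp only [Set.mem_iInter, Set.mem_iUnion, Set.mem_setOf_eq, not_forall, not_exists,
    not_lt] at hnm
  obtain ⟨k, hk2, hk⟩ := hnm
  refine ⟨k, fun n hn => ?_⟩
  have hle := hk n hn
  rw [Real.dist_0_eq_abs, abs_of_nonneg (hf0 n ω)]
  exact lt_of_le_of_lt hle hm
end

section
/- Let a, b > 0 be real numbers with a < 4b. Define f : (0,1) → ℝ by f(x) = b/√(1−x) + a·√(1−x)/(4x), and set x* := (√(a² + 32ab) − 3a) / (2(4b − a)). Then x* ∈ (0,1) and f attains its infimum over (0,1) at x*, i.e. f(x*) ≤ f(x) for all x ∈ (0,1). -/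
open MeasureTheory ProbabilityTheory Filter Set

noncomputable section

/-- The function `f(x) = b/√(1-x) + a √(1-x)/(4x)` appearing in the upper bound of
the small deviation principle. -/
def fSD (a b x : ℝ) : ℝ := b / Real.sqrt (1 - x) + a * Real.sqrt (1 - x) / (4 * x)

/-- The minimizer `x* = (√(a² + 32ab) - 3a) / (2(4b - a))`. -/
def xstarSD (a b : ℝ) : ℝ := (Real.sqrt (a ^ 2 + 32 * a * b) - 3 * a) / (2 * (4 * b - a))

end

lemma fSD_hasDerivAt (a b x : ℝ) (hx : x ∈ Set.Ioo (0:ℝ) 1) :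
    HasDerivAt (fSD a b)
      (((4*b-a)*x^2 + 3*a*x - 2*a) / (8 * Real.sqrt (1-x) * (1-x) * x^2)) x := by
  obtain ⟨hx0, hx1⟩ := hx
  have h1x : (0:ℝ) < 1 - x := by linarith
  have hsq : 0 < Real.sqrt (1-x) := Real.sqrt_pos.2 h1x
  have hg : HasDerivAt (fun y : ℝ => Real.sqrt (1-y)) ((-1)/(2*Real.sqrt (1-x))) x := by
    have h : HasDerivAt (fun y : ℝ => 1 - y) (-1) x := (hasDerivAt_id x).const_sub 1
    exact h.sqrt h1x.ne'
  have ht1 := (hasDerivAt_const x b).div hg hsq.ne'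
  have ht2 := ((hasDerivAt_const x a).mul hg).div ((hasDerivAt_id x).const_mul 4) (by positivity)
  have htot := ht1.add ht2
  convert htot using 1
  case e'_4 => rfl
  case e'_5 => rfl
  case e'_8 => rfl
  have hss : Real.sqrt (1-x) ^ 2 = 1 - x := Real.sq_sqrt h1x.le
  simp only [id_eq, Pi.mul_apply]
  set u := Real.sqrt (1-x) with hu
  rw [← hss]
  have hune : u ≠ 0 := ne_of_gt hsq
  field_simp
  linear_combination (16*a*u^2 + a*(16-8*x)) * hss

/-- The function `f` attains its infimum over `(0,1)` at `x*`. -/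
theorem fSD_min (a b : ℝ) (ha : 0 < a) (hb : 0 < b) (hab : a < 4 * b) :
    xstarSD a b ∈ Set.Ioo (0 : ℝ) 1 ∧
      ∀ x ∈ Set.Ioo (0 : ℝ) 1, fSD a b (xstarSD a b) ≤ fSD a b x := by
  set s := Real.sqrt (a ^ 2 + 32 * a * b) with hsdef
  have hD : (0:ℝ) < a ^ 2 + 32 * a * b := by positivity
  have hs2 : s ^ 2 = a ^ 2 + 32 * a * b := Real.sq_sqrt hD.le
  have hsnn : 0 ≤ s := Real.sqrt_nonneg _
  have hc : (0:ℝ) < 4 * b - a := by linarith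
  have hsgt : 3 * a < s := by nlinarith
  have hslt : s < 8 * b + a := by nlinarith
  set x0 := xstarSD a b with hx0def
  have hx0eq : x0 = (s - 3 * a) / (2 * (4 * b - a)) := rfl
  have hx0pos : 0 < x0 := by rw [hx0eq]; exact div_pos (by linarith) (by linarith)
  have hx0lt : x0 < 1 := by rw [hx0eq, div_lt_one (by linarith)]; linarith
  have hx0mem : x0 ∈ Set.Ioo (0:ℝ) 1 := ⟨hx0pos, hx0lt⟩
  have hq0 : (4 * b - a) * x0 ^ 2 + 3 * a * x0 - 2 * a = 0 := by
    rw [hx0eq]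
    have h2c : (2 * (4 * b - a)) ≠ 0 := by positivity
    field_simp
    nlinarith [hs2]
  refine ⟨hx0mem, ?_⟩
  -- continuity on (0,1)
  have hcont : ContinuousOn (fSD a b) (Set.Ioo (0:ℝ) 1) :=
    fun x hx => ((fSD_hasDerivAt a b x hx).continuousAt).continuousWithinAt
  -- deriv formula
  have hderiv : ∀ x ∈ Set.Ioo (0:ℝ) 1, deriv (fSD a b) x =
      ((4*b-a)*x^2 + 3*a*x - 2*a) / (8 * Real.sqrt (1-x) * (1-x) * x^2) :=
    fun x hx => (fSD_hasDerivAt a b x hx).deriv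
  intro x hx
  obtain ⟨hxp, hx1⟩ := hx
  rcases le_total x x0 with hle | hle
  · -- antitone on Ioc 0 x0
    have hanti : AntitoneOn (fSD a b) (Set.Ioc 0 x0) := by
      apply antitoneOn_of_deriv_nonpos (convex_Ioc 0 x0)
      · exact hcont.mono (fun y hy => ⟨hy.1, lt_of_le_of_lt hy.2 hx0lt⟩)
      · rw [interior_Ioc]
        intro y hy
        exact ((fSD_hasDerivAt a b y ⟨hy.1, hy.2.trans hx0lt⟩).differentiableAt).differentiableWithinAt
      · rw [interior_Ioc]
        intro y hy
        have hy' : y ∈ Set.Ioo (0:ℝ) 1 := ⟨hy.1, hy.2.trans hx0lt⟩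
        rw [hderiv y hy']
        have h1y : (0:ℝ) < 1 - y := by linarith [hy'.2]
        have hsy : 0 < Real.sqrt (1-y) := Real.sqrt_pos.2 h1y
        apply div_nonpos_of_nonpos_of_nonneg
        · have key : 0 < (x0 - y) * ((4*b-a)*(y+x0) + 3*a) :=
            mul_pos (by linarith [hy.2]) (by nlinarith [hy.1, hx0pos])
          nlinarith [key, hq0]
        · exact le_of_lt (mul_pos (mul_pos (mul_pos (by norm_num) hsy) h1y) (pow_pos hy'.1 2))
    exact hanti ⟨hxp, hle⟩ ⟨hx0pos, le_refl _⟩ hle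
  · -- monotone on Ico x0 1
    have hmono : MonotoneOn (fSD a b) (Set.Ico x0 1) := by
      apply monotoneOn_of_deriv_nonneg (convex_Ico x0 1)
      · exact hcont.mono (fun y hy => ⟨lt_of_lt_of_le hx0pos hy.1, hy.2⟩)
      · rw [interior_Ico]
        intro y hy
        exact ((fSD_hasDerivAt a b y ⟨hx0pos.trans hy.1, hy.2⟩).differentiableAt).differentiableWithinAt
      · rw [interior_Ico]
        intro y hy
        have hy' : y ∈ Set.Ioo (0:ℝ) 1 := ⟨hx0pos.trans hy.1, hy.2⟩
        rw [hderiv y hy']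
        have h1y : (0:ℝ) < 1 - y := by linarith [hy'.2]
        have hsy : 0 < Real.sqrt (1-y) := Real.sqrt_pos.2 h1y
        apply div_nonneg
        · have key : 0 < (y - x0) * ((4*b-a)*(y+x0) + 3*a) :=
            mul_pos (by linarith [hy.1]) (by nlinarith [hy'.1, hx0pos])
          nlinarith [key, hq0]
        · exact le_of_lt (mul_pos (mul_pos (mul_pos (by norm_num) hsy) h1y) (pow_pos hy'.1 2))
    exact hmono ⟨le_refl _, hx0lt⟩ ⟨hle, hx1⟩ hle
end
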